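/- Let ℓ be an ordered generic length vector with {n−2,n−1} long with respect to ℓ. Then for every subset J ⊆ {1,…,n−1} with J ∪ {n} short, we have J ⊆ {1,…,n−3}; consequently Ṡ(ℓ) is the full power set of {1,…,n−3} and there is exactly one such chamber up to permutation. -/

import Mathlib

/-! Shortness is inherited by subsets, and every short subset weighs less than every long one.
The complement of the long pair `{n-2, n-1}` is short and contains `J ∪ {n}` for every
`J ⊆ {1,…,n-3}`. Conversely, if a short `J ∪ {n}` contained `x ∈ {n-2, n-1}`, the short set
`{x, n}` would weigh at least as much as the long pair, since `ℓ` is ordered. -/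

open Finset

/-- The sum of `ℓ` over `J` is less than the sum over the complement in `{1,…,n}`. -/
def Short (n : ℕ) (ℓ : ℕ → ℝ) (J : Finset ℕ) : Prop :=
  ∑ j ∈ J, ℓ j < ∑ j ∈ Finset.Icc 1 n \ J, ℓ j

/-- `J` is long iff its complement in `{1,…,n}` is short. -/
def Long (n : ℕ) (ℓ : ℕ → ℝ) (J : Finset ℕ) : Prop :=
  Short n ℓ (Finset.Icc 1 n \ J)

/-- All entries positive. -/
def LengthVec (n : ℕ) (ℓ : ℕ → ℝ) : Prop := ∀ i ∈ Finset.Icc 1 n, 0 < ℓ i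

/-- `ℓ₁ ≤ … ≤ ℓₙ`. -/
def OrderedVec (n : ℕ) (ℓ : ℕ → ℝ) : Prop :=
  ∀ i j : ℕ, 1 ≤ i → i ≤ j → j ≤ n → ℓ i ≤ ℓ j

/-- No subset has sum equal to the sum of its complement. -/
def Generic (n : ℕ) (ℓ : ℕ → ℝ) : Prop :=
  ∀ J ⊆ Finset.Icc 1 n, ∑ j ∈ J, ℓ j ≠ ∑ j ∈ Finset.Icc 1 n \ J, ℓ j

/-- Dominance order: an injective order-preserving map `φ : J₁ → J₂` with `x ≤ φ x`. -/
def DomLe (J₁ J₂ : Finset ℕ) : Prop :=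
  ∃ φ : ℕ → ℕ, Set.InjOn φ ↑J₁ ∧ (∀ x ∈ J₁, φ x ∈ J₂) ∧
    (∀ x ∈ J₁, ∀ y ∈ J₁, x < y → φ x < φ y) ∧ ∀ x ∈ J₁, x ≤ φ x

/-- `Ṡ_k(ℓ)`: subsets `J ⊆ {1,…,n−1}` of cardinality `k` with `J ∪ {n}` short. -/
def SdotSet (n : ℕ) (ℓ : ℕ → ℝ) (k : ℕ) : Set (Finset ℕ) :=
  {J | J ⊆ Finset.Icc 1 (n-1) ∧ J.card = k ∧ Short n ℓ (insert n J)}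

/-- `Ṡ(ℓ)`: subsets `J ⊆ {1,…,n−1}` with `J ∪ {n}` short. -/
def Sdot (n : ℕ) (ℓ : ℕ → ℝ) : Set (Finset ℕ) :=
  {J | J ⊆ Finset.Icc 1 (n-1) ∧ Short n ℓ (insert n J)}

/-- Special: `Ṡ_{n−3}(ℓ) = ∅ ≠ Ṡ_{n−4}(ℓ)`. -/
def SpecialVec (n : ℕ) (ℓ : ℕ → ℝ) : Prop :=
  SdotSet n ℓ (n-3) = ∅ ∧ SdotSet n ℓ (n-4) ≠ ∅

/-- `T` is the type of `ℓ`: the minimal three-element long subset of `{1,…,n−1}`. -/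
def IsType (n : ℕ) (ℓ : ℕ → ℝ) (T : Finset ℕ) : Prop :=
  T ⊆ Finset.Icc 1 (n-1) ∧ T.card = 3 ∧ Long n ℓ T ∧
    ∀ T' ⊆ Finset.Icc 1 (n-1), T'.card = 3 → Long n ℓ T' → DomLe T T'

section
variable {n : ℕ} {ℓ : ℕ → ℝ} {A B J K : Finset ℕ}

theorem short_iff_two_mul_sum_lt (hJ : J ⊆ Icc 1 n) :
    Short n ℓ J ↔ 2 * ∑ j ∈ J, ℓ j < ∑ j ∈ Icc 1 n, ℓ j := by
  rw [Short, sum_sdiff_eq_sub hJ]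
  constructor <;> intro h <;> linarith

theorem long_iff_sum_lt_two_mul_sum (hJ : J ⊆ Icc 1 n) :
    Long n ℓ J ↔ ∑ j ∈ Icc 1 n, ℓ j < 2 * ∑ j ∈ J, ℓ j := by
  rw [Long, short_iff_two_mul_sum_lt sdiff_subset, sum_sdiff_eq_sub hJ]
  constructor <;> intro h <;> linarith

theorem Short.anti (h0 : ∀ i ∈ Icc 1 n, 0 ≤ ℓ i) (hK : K ⊆ Icc 1 n) (hJK : J ⊆ K)
    (h : Short n ℓ K) : Short n ℓ J := by
  rw [short_iff_two_mul_sum_lt (hJK.trans hK)]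
  rw [short_iff_two_mul_sum_lt hK] at h
  have : ∑ j ∈ J, ℓ j ≤ ∑ j ∈ K, ℓ j :=
    sum_le_sum_of_subset_of_nonneg hJK fun i hi _ => h0 i (hK hi)
  linarith

theorem Short.sum_lt_sum_of_long (hA : A ⊆ Icc 1 n) (hB : B ⊆ Icc 1 n)
    (hBs : Short n ℓ B) (hAl : Long n ℓ A) : ∑ j ∈ B, ℓ j < ∑ j ∈ A, ℓ j := by
  rw [short_iff_two_mul_sum_lt hB] at hBs
  rw [long_iff_sum_lt_two_mul_sum hA] at hAl
  linarith

theorem pair_subset_Icc (hn : 3 ≤ n) : ({n-2, n-1} : Finset ℕ) ⊆ Icc 1 n := by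
  intro x hx
  simp only [mem_insert, mem_singleton, mem_Icc] at hx ⊢
  omega

theorem insert_subset_Icc (hn : 3 ≤ n) (hJ : J ⊆ Icc 1 (n-1)) : insert n J ⊆ Icc 1 n :=
  insert_subset (by simp only [mem_Icc]; omega) (hJ.trans (Icc_subset_Icc_right (by omega)))

theorem insert_subset_sdiff_pair (hn : 3 ≤ n) (hJ : J ⊆ Icc 1 (n-3)) :
    insert n J ⊆ Icc 1 n \ {n-2, n-1} := by
  intro y hy
  rcases mem_insert.1 hy with rfl | hy
  · simp only [mem_sdiff, mem_Icc, mem_insert, mem_singleton]; omega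
  · have := mem_Icc.1 (hJ hy)
    simp only [mem_sdiff, mem_Icc, mem_insert, mem_singleton]; omega

theorem subset_Icc_sub_three_of_short_insert (hn : 3 ≤ n) (h0 : ∀ i ∈ Icc 1 n, 0 ≤ ℓ i)
    (hord : OrderedVec n ℓ) (hlong : Long n ℓ {n-2, n-1}) (hJ : J ⊆ Icc 1 (n-1))
    (hS : Short n ℓ (insert n J)) : J ⊆ Icc 1 (n-3) := by
  intro x hx
  by_contra hx3
  have hx' : x = n - 2 ∨ x = n - 1 := by
    have := hJ hx
    simp only [mem_Icc] at this hx3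
    omega
  have hxn : ({x, n} : Finset ℕ) ⊆ insert n J :=
    insert_subset (mem_insert_of_mem hx) (singleton_subset_iff.2 (mem_insert_self n J))
  have hlt := (hS.anti h0 (insert_subset_Icc hn hJ) hxn).sum_lt_sum_of_long
    (pair_subset_Icc hn) (hxn.trans (insert_subset_Icc hn hJ)) hlong
  rw [sum_pair (by omega), sum_pair (by omega)] at hlt
  rcases hx' with rfl | rfl
  · linarith [hord (n-1) n (by omega) (by omega) le_rfl]
  · linarith [hord (n-2) n (by omega) (by omega) le_rfl]

end

theorem disconnected_chamber_general (n : ℕ) (ℓ : ℕ → ℝ) (hn : 3 ≤ n)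
    (hpos : LengthVec n ℓ) (hord : OrderedVec n ℓ)
    (hlong : Long n ℓ {n-2, n-1}) :
    (∀ J ⊆ Finset.Icc 1 (n-1), Short n ℓ (insert n J) → J ⊆ Finset.Icc 1 (n-3)) ∧
    Sdot n ℓ = {J : Finset ℕ | J ⊆ Finset.Icc 1 (n-3)} := by
  have h0 : ∀ i ∈ Icc 1 n, 0 ≤ ℓ i := fun i hi => (hpos i hi).le
  have hsub : ∀ J ⊆ Icc 1 (n-1), Short n ℓ (insert n J) → J ⊆ Icc 1 (n-3) :=
    fun J => subset_Icc_sub_three_of_short_insert hn h0 hord hlong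
  refine ⟨hsub, Set.ext fun J => ⟨fun hJ => hsub J hJ.1 hJ.2, fun hJ => ⟨?_, ?_⟩⟩⟩
  · exact hJ.trans (Icc_subset_Icc_right (by omega))
  · exact hlong.anti h0 sdiff_subset (insert_subset_sdiff_pair hn hJ)

/-- If {n−2,n−1} is long, then J ∪ {n} short forces J ⊆ {1,…,n−3};
consequently Ṡ(ℓ) is the full power set of {1,…,n−3}. -/
theorem disconnected_chamber (n : ℕ) (ℓ : ℕ → ℝ) (hn : 3 ≤ n)
    (hpos : LengthVec n ℓ) (hord : OrderedVec n ℓ) (hgen : Generic n ℓ)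
    (hlong : Long n ℓ {n-2, n-1}) :
    (∀ J ⊆ Finset.Icc 1 (n-1), Short n ℓ (insert n J) → J ⊆ Finset.Icc 1 (n-3)) ∧
    Sdot n ℓ = {J : Finset ℕ | J ⊆ Finset.Icc 1 (n-3)} :=
  disconnected_chamber_general n ℓ hn hpos hord hlong
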